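/- arXiv:math/0104016 — 2 statements merged into one kernel-verified Lean document; each statement's English description precedes it below -/
import Mathlib

section
/- Let C be a weakly self-dual binary linear code of even length n with weight distribution (A_0, …, A_n) (so A_j = 0 for odd j). Then for every real λ with 0 < λ < 1, Σ_{j=0}^{n/2} A_{2j} λ^j ≤ (1+λ)^{n/2}. -/
/-!
All terms are nonnegative, so `C` may be enlarged to `D = C^⊥⊥ ⊇ C`, which is still
self-orthogonal and is the dual of `E = C^⊥`. Codewords of `D` have even weight, and
`wt (c + c') = wt c + wt c' - 2 wt (c * c')` makes `c ↦ wt c / 2 mod 2` linear on `D`, so it is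
`c ↦ z ⬝ᵥ c` for some `z`. With `χ x = (-1)^x` and `ω = i √λ`, expanding the product and
orthogonality of characters give
  `∑_{a ∈ E} ∏_i (1 + χ (a_i + z_i) ω) = |E| ∑_{c ∈ D} χ (z ⬝ᵥ c) ω^{wt c}`
  `                                    = |E| ∑_{c ∈ D} λ^{wt c / 2}`,
while every factor on the left has modulus `√(1 + λ)`; hence
`∑_{c ∈ D} λ^{wt c / 2} ≤ (1 + λ)^{n/2}`.
-/

open scoped Classical

/-- The dual code of a binary linear code `C ⊆ GF(2)^n`. -/
def dualCode {n : ℕ} (C : Submodule (ZMod 2) (Fin n → ZMod 2)) :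
    Submodule (ZMod 2) (Fin n → ZMod 2) where
  carrier := {a | ∀ c ∈ C, ∑ i, a i * c i = 0}
  add_mem' := by
    intro a b ha hb c hc
    simp only [Set.mem_setOf_eq] at *
    simp [add_mul, Finset.sum_add_distrib, ha c hc, hb c hc]
  zero_mem' := by simp
  smul_mem' := by
    intro r a ha c hc
    simp only [Set.mem_setOf_eq] at *
    simp [smul_eq_mul, mul_assoc, ← Finset.mul_sum, ha c hc]

/-- The finset of codewords of a binary linear code. -/
noncomputable def codewords {n : ℕ} (C : Submodule (ZMod 2) (Fin n → ZMod 2)) :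
    Finset (Fin n → ZMod 2) :=
  Finset.univ.filter (fun c => c ∈ C)

/-- `A w`: the number of codewords of Hamming weight `w`. -/
noncomputable def weightDist {n : ℕ} (C : Submodule (ZMod 2) (Fin n → ZMod 2)) (w : ℕ) : ℕ :=
  (Finset.univ.filter (fun c => c ∈ C ∧ hammingNorm c = w)).card
open Finset Matrix Complex

section HammingWeight

variable {ι : Type*} [Fintype ι]

theorem hammingNorm_eq_sum_val (v : ι → ZMod 2) : hammingNorm v = ∑ i, (v i).val := by
  rw [hammingNorm, card_filter]
  refine sum_congr rfl fun i _ => ?_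
  generalize v i = x
  fin_cases x <;> rfl

theorem sum_eq_hammingNorm (v : ι → ZMod 2) : ∑ i, v i = hammingNorm v := by
  simp [hammingNorm_eq_sum_val]

theorem dotProduct_eq_hammingNorm_mul (u v : ι → ZMod 2) : u ⬝ᵥ v = hammingNorm (u * v) :=
  sum_eq_hammingNorm (u * v)

theorem dotProduct_self_eq_hammingNorm (v : ι → ZMod 2) : v ⬝ᵥ v = hammingNorm v := by
  have hidem : v * v = v := funext fun i => by
    simp only [Pi.mul_apply]
    generalize v i = x
    fin_cases x <;> rfl
  rw [dotProduct_eq_hammingNorm_mul, hidem]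

theorem hammingNorm_add_add_two_mul (u v : ι → ZMod 2) :
    hammingNorm (u + v) + 2 * hammingNorm (u * v) = hammingNorm u + hammingNorm v := by
  simp only [hammingNorm_eq_sum_val, mul_sum, ← sum_add_distrib, Pi.add_apply, Pi.mul_apply]
  refine sum_congr rfl fun i _ => ?_
  generalize u i = x
  generalize v i = y
  fin_cases x <;> fin_cases y <;> rfl

theorem two_dvd_hammingNorm {v : ι → ZMod 2} (h : v ⬝ᵥ v = 0) : 2 ∣ hammingNorm v := by
  rwa [dotProduct_self_eq_hammingNorm, ZMod.natCast_eq_zero_iff] at h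

theorem half_hammingNorm_add {u v : ι → ZMod 2} (hu : u ⬝ᵥ u = 0) (hv : v ⬝ᵥ v = 0)
    (huv : u ⬝ᵥ v = 0) :
    ((hammingNorm (u + v) / 2 : ℕ) : ZMod 2) =
      (hammingNorm u / 2 : ℕ) + (hammingNorm v / 2 : ℕ) := by
  obtain ⟨a, ha⟩ := two_dvd_hammingNorm hu
  obtain ⟨b, hb⟩ := two_dvd_hammingNorm hv
  obtain ⟨m, hm⟩ : 2 ∣ hammingNorm (u * v) := by
    rwa [dotProduct_eq_hammingNorm_mul, ZMod.natCast_eq_zero_iff] at huv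
  have h := hammingNorm_add_add_two_mul u v
  have hhalf : hammingNorm (u + v) / 2 + 2 * m = hammingNorm u / 2 + hammingNorm v / 2 := by
    omega
  rw [← Nat.cast_add, ← hhalf, Nat.cast_add, Nat.cast_mul, ZMod.natCast_self, zero_mul, add_zero]

end HammingWeight

theorem exists_dotProduct_eq_of_linearMap {ι K : Type*} [Fintype ι] [DecidableEq ι] [Field K]
    {D : Submodule K (ι → K)} (φ : D →ₗ[K] K) : ∃ z : ι → K, ∀ c : D, z ⬝ᵥ c = φ c := by
  obtain ⟨g, hg⟩ := LinearMap.exists_extend φ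
  refine ⟨(dotProductEquiv K ι).symm g, fun c => ?_⟩
  rw [← hg]
  exact LinearMap.congr_fun ((dotProductEquiv K ι).apply_symm_apply g) c

theorem AddChar.map_sum_eq_prod {A M ι : Type*} [AddCommMonoid A] [CommMonoid M]
    (ψ : AddChar A M) (s : Finset ι) (f : ι → A) : ψ (∑ i ∈ s, f i) = ∏ i ∈ s, ψ (f i) := by
  induction s using Finset.cons_induction with
  | empty => simp
  | cons a s ha ih => rw [sum_cons, prod_cons, AddChar.map_add_eq_mul, ih]

theorem ZMod.eq_zero_or_eq_one_mod_two (x : ZMod 2) : x = 0 ∨ x = 1 := by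
  revert x
  decide

noncomputable def signChar : AddChar (ZMod 2) ℂ :=
  AddChar.zmodChar 2 (by norm_num : (-1 : ℂ) ^ 2 = 1)

theorem signChar_natCast (m : ℕ) : signChar m = (-1) ^ m :=
  AddChar.zmodChar_apply' _ m

@[simp] theorem signChar_one : signChar 1 = -1 := by
  simpa using signChar_natCast 1

theorem signChar_eq_one_iff {x : ZMod 2} : signChar x = 1 ↔ x = 0 := by
  obtain rfl | rfl := x.eq_zero_or_eq_one_mod_two <;> norm_num

theorem norm_one_add_signChar_mul_I (x : ZMod 2) (s : ℝ) :
    ‖1 + signChar x * (I * s)‖ = √(1 + s ^ 2) := by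
  obtain rfl | rfl := x.eq_zero_or_eq_one_mod_two
  · simpa [mul_comm I] using norm_add_mul_I 1 s
  · simpa [mul_comm I] using norm_add_mul_I 1 (-s)

theorem prod_one_add_signChar_mul {ι : Type*} [Fintype ι] [DecidableEq ι] (v : ι → ZMod 2)
    (ω : ℂ) :
    ∏ i, (1 + signChar (v i) * ω) = ∑ c : ι → ZMod 2, signChar (v ⬝ᵥ c) * ω ^ hammingNorm c := by
  have hfactor : ∀ i, 1 + signChar (v i) * ω = ∑ x : ZMod 2, signChar (v i * x) * ω ^ x.val := by
    intro i
    have hsum : ∀ f : ZMod 2 → ℂ, ∑ x, f x = f 0 + f 1 := Fin.sum_univ_two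
    simp [hsum, ZMod.val_one]
  simp only [hfactor, Fintype.prod_sum, prod_mul_distrib, ← AddChar.map_sum_eq_prod,
    prod_pow_eq_pow_sum, hammingNorm_eq_sum_val]
  rfl

section Codes

variable {n : ℕ}

theorem mem_dualCode {C : Submodule (ZMod 2) (Fin n → ZMod 2)} {x : Fin n → ZMod 2} :
    x ∈ dualCode C ↔ ∀ c ∈ C, x ⬝ᵥ c = 0 :=
  Iff.rfl

theorem dualCode_antitone : Antitone (dualCode (n := n)) :=
  fun _ _ h _ hx c hc => hx c (h hc)

theorem le_dualCode_dualCode (C : Submodule (ZMod 2) (Fin n → ZMod 2)) :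
    C ≤ dualCode (dualCode C) :=
  fun c hc x hx => (dotProduct_comm c x).trans (hx c hc)

theorem codewords_mono : Monotone (codewords (n := n)) :=
  fun _ _ h c => by simpa [codewords] using @h c

theorem exists_dotProduct_eq_half_hammingNorm {D : Submodule (ZMod 2) (Fin n → ZMod 2)}
    (hD : D ≤ dualCode D) :
    ∃ z : Fin n → ZMod 2, ∀ c ∈ D, z ⬝ᵥ c = (hammingNorm c / 2 : ℕ) := by
  let φ : D →+ ZMod 2 := AddMonoidHom.mk' (fun c => (hammingNorm (c : Fin n → ZMod 2) / 2 : ℕ))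
    fun c c' => half_hammingNorm_add (hD c.2 c c.2) (hD c'.2 c' c'.2) (hD c.2 c' c'.2)
  obtain ⟨z, hz⟩ := exists_dotProduct_eq_of_linearMap (φ.toZModLinearMap 2)
  exact ⟨z, fun c hc => hz ⟨c, hc⟩⟩

theorem sum_codewords_signChar_dotProduct (E : Submodule (ZMod 2) (Fin n → ZMod 2))
    (x : Fin n → ZMod 2) :
    ∑ a ∈ codewords E, signChar (a ⬝ᵥ x) =
      if x ∈ dualCode E then (#(codewords E) : ℂ) else 0 := by
  let ψ : AddChar E ℂ := signChar.compAddMonoidHom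
    ((dotProductEquiv (ZMod 2) (Fin n) x).comp E.subtype).toAddMonoidHom
  have hψ : ψ = 0 ↔ x ∈ dualCode E := by
    simp [ψ, AddChar.eq_zero_iff, signChar_eq_one_iff, mem_dualCode]
  rw [sum_subtype (codewords E) (p := (· ∈ E)) (by simp [codewords])]
  simp_rw [dotProduct_comm _ x]
  change ∑ a, ψ a = _
  rw [AddChar.sum_eq_ite, Fintype.card_subtype]
  exact if_congr hψ rfl rfl

theorem sum_codewords_prod_one_add_signChar_mul (E : Submodule (ZMod 2) (Fin n → ZMod 2))
    (z : Fin n → ZMod 2) (ω : ℂ) :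
    ∑ a ∈ codewords E, ∏ i, (1 + signChar ((a + z) i) * ω) =
      #(codewords E) * ∑ c ∈ codewords (dualCode E), signChar (z ⬝ᵥ c) * ω ^ hammingNorm c := by
  simp_rw [prod_one_add_signChar_mul]
  rw [sum_comm, mul_sum, show codewords (dualCode E) = univ.filter (· ∈ dualCode E) from rfl,
    sum_filter]
  refine sum_congr rfl fun c _ => ?_
  simp_rw [add_dotProduct, AddChar.map_add_eq_mul, mul_assoc, ← sum_mul,
    sum_codewords_signChar_dotProduct, ite_mul, zero_mul]

theorem signChar_dotProduct_mul_pow_hammingNorm {z c : Fin n → ZMod 2}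
    (hz : z ⬝ᵥ c = (hammingNorm c / 2 : ℕ)) (hc : 2 ∣ hammingNorm c) {lam : ℝ} (hlam : 0 ≤ lam) :
    signChar (z ⬝ᵥ c) * (I * √lam) ^ hammingNorm c = ((lam ^ (hammingNorm c / 2) : ℝ) : ℂ) := by
  obtain ⟨k, hk⟩ := hc
  have hsq : (I * √lam) ^ 2 = -(lam : ℂ) := by
    rw [mul_pow, I_sq, ← ofReal_pow, Real.sq_sqrt hlam, neg_one_mul]
  rw [hz, hk, Nat.mul_div_cancel_left k two_pos, signChar_natCast, pow_mul, hsq, ← mul_pow,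
    neg_one_mul, neg_neg, ofReal_pow]

theorem norm_prod_one_add_signChar_mul_I (hn : Even n) (v : Fin n → ZMod 2) {lam : ℝ}
    (hlam : 0 ≤ lam) : ‖∏ i, (1 + signChar (v i) * (I * √lam))‖ = (1 + lam) ^ (n / 2) := by
  obtain ⟨m, rfl⟩ := hn
  simp_rw [norm_prod, norm_one_add_signChar_mul_I, Real.sq_sqrt hlam, prod_const, card_univ,
    Fintype.card_fin, ← two_mul, pow_mul, Real.sq_sqrt (by linarith : 0 ≤ 1 + lam),
    Nat.mul_div_cancel_left m two_pos]

theorem sum_codewords_pow_half_hammingNorm_le (E : Submodule (ZMod 2) (Fin n → ZMod 2))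
    (hE : dualCode E ≤ dualCode (dualCode E)) (hn : Even n) {lam : ℝ} (hlam : 0 ≤ lam) :
    ∑ c ∈ codewords (dualCode E), lam ^ (hammingNorm c / 2) ≤ (1 + lam) ^ (n / 2) := by
  obtain ⟨z, hz⟩ := exists_dotProduct_eq_half_hammingNorm hE
  set N : ℕ := #(codewords E)
  have hN : 0 < N := card_pos.mpr ⟨0, by simp [codewords]⟩
  refine le_of_mul_le_mul_left ?_ (Nat.cast_pos.mpr hN : (0 : ℝ) < N)
  calc (N : ℝ) * ∑ c ∈ codewords (dualCode E), lam ^ (hammingNorm c / 2)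
      = ‖(N : ℂ) * ∑ c ∈ codewords (dualCode E), ((lam ^ (hammingNorm c / 2) : ℝ) : ℂ)‖ := by
        rw [← ofReal_sum, norm_mul, Complex.norm_natCast, norm_real, Real.norm_of_nonneg
          (sum_nonneg fun c _ => pow_nonneg hlam (hammingNorm c / 2))]
    _ = ‖∑ a ∈ codewords E, ∏ i, (1 + signChar ((a + z) i) * (I * √lam))‖ := by
        rw [sum_codewords_prod_one_add_signChar_mul]
        congr 2
        refine sum_congr rfl fun c hc => ?_
        have hcD : c ∈ dualCode E := by simpa [codewords] using hc
        exact (signChar_dotProduct_mul_pow_hammingNorm (hz c hcD)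
          (two_dvd_hammingNorm (hE hcD c hcD)) hlam).symm
    _ ≤ ∑ a ∈ codewords E, ‖∏ i, (1 + signChar ((a + z) i) * (I * √lam))‖ := norm_sum_le _ _
    _ = N * (1 + lam) ^ (n / 2) := by
        simp_rw [norm_prod_one_add_signChar_mul_I hn _ hlam, sum_const, nsmul_eq_mul, N]

theorem sum_weightDist_mul_pow_le (C : Submodule (ZMod 2) (Fin n → ZMod 2)) {lam : ℝ}
    (hlam : 0 ≤ lam) :
    ∑ j ∈ range (n / 2 + 1), (weightDist C (2 * j) : ℝ) * lam ^ j ≤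
      ∑ c ∈ codewords C, lam ^ (hammingNorm c / 2) := by
  have hmaps : ∀ c ∈ codewords C, hammingNorm c / 2 ∈ range (n / 2 + 1) := fun c _ => by
    have := hammingNorm_le_card_fintype (x := c)
    rw [Fintype.card_fin] at this
    rw [mem_range]
    omega
  rw [← sum_fiberwise_of_maps_to' hmaps]
  refine sum_le_sum fun j _ => ?_
  rw [sum_const, nsmul_eq_mul]
  gcongr
  refine card_le_card fun c hc => ?_
  simp only [codewords, mem_filter, mem_univ, true_and] at hc ⊢
  exact ⟨hc.1, by omega⟩

end Codes

theorem lemma_III_4_general (n : ℕ) (hn : Even n)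
    (C : Submodule (ZMod 2) (Fin n → ZMod 2)) (hC : C ≤ dualCode C)
    (lam : ℝ) (hlam : 0 < lam) :
    ∑ j ∈ Finset.range (n / 2 + 1), (weightDist C (2 * j) : ℝ) * lam ^ j
      ≤ (1 + lam) ^ (n / 2) := by
  have hD : dualCode (dualCode C) ≤ dualCode (dualCode (dualCode C)) :=
    (dualCode_antitone hC).trans (le_dualCode_dualCode _)
  calc _ ≤ ∑ c ∈ codewords C, lam ^ (hammingNorm c / 2) := sum_weightDist_mul_pow_le C hlam.le
    _ ≤ ∑ c ∈ codewords (dualCode (dualCode C)), lam ^ (hammingNorm c / 2) :=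
        sum_le_sum_of_subset_of_nonneg (codewords_mono (le_dualCode_dualCode C))
          fun _ _ _ => pow_nonneg hlam.le _
    _ ≤ (1 + lam) ^ (n / 2) := sum_codewords_pow_half_hammingNorm_le _ hD hn hlam.le

theorem lemma_III_4 (n : ℕ) (hn : Even n)
    (C : Submodule (ZMod 2) (Fin n → ZMod 2)) (hC : C ≤ dualCode C)
    (lam : ℝ) (hlam : 0 < lam) (hlam1 : lam < 1) :
    ∑ j ∈ Finset.range (n / 2 + 1), (weightDist C (2 * j) : ℝ) * lam ^ j
      ≤ (1 + lam) ^ (n / 2) :=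
  lemma_III_4_general n hn C hC lam hlam
end

section
/- Let C be a weakly self-dual binary linear code of even length n. Then for every u with 1 < u < 2, Σ_{j=0}^{n/2} A_{2j} · u^{n/2 − j} · (2−u)^j ≤ 2^{n/2}, where (A_0, …, A_n) is the weight distribution of C. -/
open scoped Classical

/-!
Let `C` be self-orthogonal and let `f i = (f i 0, f i 1)` be nonnegative unit vectors, one for
each coordinate; put `W(f) = ∑_{c ∈ C} ∏ᵢ f i (cᵢ)`. Expanding `W(f)²` as `∑_{c ∈ C} ∑_{a ∈ C} F(a) F(a + c)`
with `F(x) = ∏ᵢ f i (xᵢ)`, enlarging the inner sum from `C` to `C^⊥` and applying Poisson summation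
over `C` gives `|C| W(f)² ≤ ∑_{d ∈ C} W(f_d)`, where each `f_d` is again a family of nonnegative unit
vectors, made of the absolute values of coordinatewise correlations of `f`. So the supremum `M` of
`W` satisfies `M² ≤ M`, i.e. `W ≤ 1`. For `f i = (√(u/2), √((2-u)/2))`, and since all weights in `C`
are even, `2^{n/2} W(f)` is the sum in the theorem.
-/

open Finset

namespace BinaryCode

variable {ι : Type*}

lemma eq_zero_or_eq_one (a : ZMod 2) : a = 0 ∨ a = 1 := by revert a; decide

lemma sum_zmod_two {M : Type*} [AddCommMonoid M] (g : ZMod 2 → M) : ∑ a, g a = g 0 + g 1 :=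
  Fin.sum_univ_two g

noncomputable def sign : AddChar (ZMod 2) ℝ := AddChar.zmodChar 2 (ζ := (-1 : ℝ)) (by norm_num)

lemma sign_one : sign 1 = -1 := by
  rw [sign, AddChar.zmodChar_apply]; norm_num [show (1 : ZMod 2).val = 1 from rfl]

lemma sign_eq_one_iff {a : ZMod 2} : sign a = 1 ↔ a = 0 := by
  rcases eq_zero_or_eq_one a with rfl | rfl <;> norm_num [sign_one]

lemma sign_sum {κ : Type*} (s : Finset κ) (a : κ → ZMod 2) :
    sign (∑ k ∈ s, a k) = ∏ k ∈ s, sign (a k) := by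
  induction s using Finset.cons_induction with
  | empty => simp
  | cons k s hk ih => rw [sum_cons, prod_cons, AddChar.map_add_eq_mul, ih]

lemma sq_sum_eq_sum_sum_mul_add {A R : Type*} [AddGroup A] [Fintype A] [Semiring R]
    (G : A → R) : (∑ a, G a) ^ 2 = ∑ c, ∑ a, G a * G (a + c) :=
  calc (∑ a, G a) ^ 2 = ∑ a, ∑ b, G a * G b := by rw [sq, sum_mul_sum]
    _ = ∑ a, ∑ c, G a * G (a + c) :=
        sum_congr rfl fun a _ => (Equiv.sum_comp (Equiv.addLeft a) fun b => G a * G b).symm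
    _ = ∑ c, ∑ a, G a * G (a + c) := sum_comm

def IsUnitProfile (f : ι → ZMod 2 → ℝ) : Prop :=
  ∀ i, 0 ≤ f i ∧ f i 0 ^ 2 + f i 1 ^ 2 = 1

lemma IsUnitProfile.le_one {f : ι → ZMod 2 → ℝ} (hf : IsUnitProfile f) (i : ι) (a : ZMod 2) :
    f i a ≤ 1 := by
  have h0 := (hf i).1 0
  have h1 := (hf i).1 1
  have := (hf i).2
  rcases eq_zero_or_eq_one a with rfl | rfl <;> nlinarith

noncomputable def correlation (g : ZMod 2 → ℝ) (c y : ZMod 2) : ℝ :=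
  ∑ b, sign (y * b) * (g b * g (b + c))

-- For `d = 1` this is `(τ² - σ²)² + (2στ)² = (τ² + σ²)²` with `τ = g 0`, `σ = g 1`.
lemma sq_correlation_add_sq_correlation (g : ZMod 2 → ℝ) (d : ZMod 2) :
    correlation g 0 d ^ 2 + correlation g 1 (1 + d) ^ 2 = (g 0 ^ 2 + g 1 ^ 2) ^ 2 := by
  have h11 : (1 : ZMod 2) + 1 = 0 := rfl
  rcases eq_zero_or_eq_one d with rfl | rfl <;>
    simp [correlation, sum_zmod_two, sign_one, h11] <;> ring

noncomputable def correlationProfile (f : ι → ZMod 2 → ℝ) (d : ι → ZMod 2) :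
    ι → ZMod 2 → ℝ :=
  fun i a => |correlation (f i) a (a + d i)|

lemma IsUnitProfile.correlationProfile {f : ι → ZMod 2 → ℝ} (hf : IsUnitProfile f)
    (d : ι → ZMod 2) : IsUnitProfile (correlationProfile f d) := fun i =>
  ⟨fun _ => abs_nonneg _, by
    simp only [BinaryCode.correlationProfile, sq_abs, zero_add,
      sq_correlation_add_sq_correlation, (hf i).2, one_pow]⟩

variable [Fintype ι]

def IsSelfOrthogonal (C : Submodule (ZMod 2) (ι → ZMod 2)) : Prop :=
  ∀ a ∈ C, ∀ b ∈ C, a ⬝ᵥ b = 0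

def prodWeight (f : ι → ZMod 2 → ℝ) (x : ι → ZMod 2) : ℝ :=
  ∏ i, f i (x i)

lemma prod_apply_eq_pow_hammingNorm {R : Type*} [CommMonoid R] (g : ZMod 2 → R)
    (x : ι → ZMod 2) :
    ∏ i, g (x i) = g 1 ^ hammingNorm x * g 0 ^ (Fintype.card ι - hammingNorm x) := by
  have h (a : ZMod 2) : g a = if a ≠ 0 then g 1 else g 0 := by
    rcases eq_zero_or_eq_one a with rfl | rfl <;> simp
  have hcard := card_filter_add_card_filter_not (s := univ) fun i => x i ≠ 0
  rw [prod_congr rfl fun i _ => h (x i), prod_ite, prod_const, prod_const, hammingNorm,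
    ← card_univ, ← hcard, Nat.add_sub_cancel_left]

lemma dotProduct_self_eq_hammingNorm (x : ι → ZMod 2) : x ⬝ᵥ x = hammingNorm x := by
  have h : ∀ a : ZMod 2, a * a = if a ≠ 0 then 1 else 0 := by decide
  simp only [dotProduct, h, sum_boole, hammingNorm]

lemma IsSelfOrthogonal.even_hammingNorm {C : Submodule (ZMod 2) (ι → ZMod 2)}
    (hC : IsSelfOrthogonal C) {c : ι → ZMod 2} (hc : c ∈ C) : Even (hammingNorm c) :=
  ZMod.natCast_eq_zero_iff_even.1 ((dotProduct_self_eq_hammingNorm c).symm.trans (hC c hc c hc))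

variable [DecidableEq ι]

lemma sum_sign_dotProduct_mul_prod (y : ι → ZMod 2) (h : ι → ZMod 2 → ℝ) :
    ∑ x, sign (y ⬝ᵥ x) * ∏ i, h i (x i) = ∏ i, ∑ b, sign (y i * b) * h i b := by
  rw [Fintype.prod_sum]
  refine sum_congr rfl fun x _ => ?_
  rw [dotProduct, sign_sum, prod_mul_distrib]

lemma sum_sign_dotProduct_mul_prodWeight_mul (f : ι → ZMod 2 → ℝ) (c y : ι → ZMod 2) :
    ∑ x, sign (y ⬝ᵥ x) * (prodWeight f x * prodWeight f (x + c)) =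
      ∏ i, correlation (f i) (c i) (y i) := by
  simp only [prodWeight, ← prod_mul_distrib, Pi.add_apply]
  exact sum_sign_dotProduct_mul_prod y fun i b => f i b * f i (b + c i)

noncomputable def weightEnum (C : Submodule (ZMod 2) (ι → ZMod 2)) (f : ι → ZMod 2 → ℝ) : ℝ :=
  ∑ c : C, prodWeight f c

lemma weightEnum_nonneg (C : Submodule (ZMod 2) (ι → ZMod 2)) {f : ι → ZMod 2 → ℝ}
    (hf : ∀ i, 0 ≤ f i) : 0 ≤ weightEnum C f :=
  sum_nonneg fun _ _ => prod_nonneg fun i _ => hf i _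

lemma weightEnum_le_card (C : Submodule (ZMod 2) (ι → ZMod 2)) {f : ι → ZMod 2 → ℝ}
    (hf : IsUnitProfile f) : weightEnum C f ≤ Fintype.card C := by
  have h (c : C) : prodWeight f c ≤ 1 :=
    prod_le_one (fun i _ => (hf i).1 _) fun i _ => hf.le_one i _
  calc weightEnum C f ≤ ∑ _c : C, (1 : ℝ) := sum_le_sum fun c _ => h c
    _ = Fintype.card C := by simp

lemma sum_sign_dotProduct (C : Submodule (ZMod 2) (ι → ZMod 2)) (x : ι → ZMod 2) :
    ∑ c : C, sign ((c : ι → ZMod 2) ⬝ᵥ x) =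
      if ∀ c ∈ C, c ⬝ᵥ x = 0 then (Fintype.card C : ℝ) else 0 := by
  let ψ : AddChar C ℝ := sign.compAddMonoidHom
    (AddMonoidHom.mk' (fun c : C => (c : ι → ZMod 2) ⬝ᵥ x) fun a b => add_dotProduct _ _ _)
  have hψ : ψ = 0 ↔ ∀ c ∈ C, c ⬝ᵥ x = 0 := by
    simp [AddChar.eq_zero_iff, ψ, sign_eq_one_iff]
  rw [← if_congr hψ rfl rfl]
  exact AddChar.sum_eq_ite ψ

lemma card_mul_sum_le_sum_sign_mul {C : Submodule (ZMod 2) (ι → ZMod 2)}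
    (hC : IsSelfOrthogonal C) {H : (ι → ZMod 2) → ℝ} (hH : ∀ x, 0 ≤ H x) :
    Fintype.card C * ∑ a : C, H a ≤ ∑ y : C, ∑ x, sign ((y : ι → ZMod 2) ⬝ᵥ x) * H x := by
  simp_rw [sum_comm (γ := C), ← sum_mul, sum_sign_dotProduct, ite_mul, zero_mul, mul_sum]
  rw [← sum_filter]
  refine (sum_map univ (Function.Embedding.subtype (· ∈ C))
    fun x => (Fintype.card C : ℝ) * H x).symm.le.trans <| sum_le_sum_of_subset_of_nonneg
      (fun x hx => ?_) fun x _ _ => mul_nonneg (Nat.cast_nonneg _) (hH x)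
  obtain ⟨a, -, rfl⟩ := mem_map.1 hx
  exact mem_filter.2 ⟨mem_univ _, fun c hc => hC c hc a a.2⟩

lemma card_mul_weightEnum_sq_le {C : Submodule (ZMod 2) (ι → ZMod 2)} (hC : IsSelfOrthogonal C)
    {f : ι → ZMod 2 → ℝ} (hf : ∀ i, 0 ≤ f i) :
    Fintype.card C * weightEnum C f ^ 2 ≤ ∑ d : C, weightEnum C (correlationProfile f d) := by
  have hF (x : ι → ZMod 2) : 0 ≤ prodWeight f x := prod_nonneg fun i _ => hf i (x i)
  calc (Fintype.card C : ℝ) * weightEnum C f ^ 2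
      = ∑ c : C, Fintype.card C * ∑ a : C,
          prodWeight f a * prodWeight f ((a : ι → ZMod 2) + c) := by
        rw [weightEnum, sq_sum_eq_sum_sum_mul_add, mul_sum]
        rfl
    _ ≤ ∑ c : C, ∑ y : C, ∑ x, sign ((y : ι → ZMod 2) ⬝ᵥ x) *
          (prodWeight f x * prodWeight f (x + (c : ι → ZMod 2))) :=
        sum_le_sum fun c _ => card_mul_sum_le_sum_sign_mul hC
          (H := fun x => prodWeight f x * prodWeight f (x + (c : ι → ZMod 2)))
          fun x => mul_nonneg (hF x) (hF _)
    _ = ∑ c : C, ∑ y : C,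
          ∏ i, correlation (f i) ((c : ι → ZMod 2) i) ((y : ι → ZMod 2) i) := by
        simp only [sum_sign_dotProduct_mul_prodWeight_mul]
    _ ≤ ∑ c : C, ∑ y : C,
          ∏ i, |correlation (f i) ((c : ι → ZMod 2) i) ((y : ι → ZMod 2) i)| :=
        sum_le_sum fun c _ => sum_le_sum fun y _ => (le_abs_self _).trans (abs_prod _ _).le
    _ = ∑ c : C, ∑ d : C,
          ∏ i, |correlation (f i) ((c : ι → ZMod 2) i) (((c + d : C) : ι → ZMod 2) i)| :=
        sum_congr rfl fun c _ => (Equiv.sum_comp (Equiv.addLeft c) _).symm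
    _ = ∑ d : C, weightEnum C (correlationProfile f d) := sum_comm

theorem IsSelfOrthogonal.weightEnum_le_one {C : Submodule (ZMod 2) (ι → ZMod 2)}
    (hC : IsSelfOrthogonal C) {f : ι → ZMod 2 → ℝ} (hf : IsUnitProfile f) :
    weightEnum C f ≤ 1 := by
  have hne : Nonempty {g : ι → ZMod 2 → ℝ // IsUnitProfile g} := ⟨⟨f, hf⟩⟩
  set M := ⨆ g : {g : ι → ZMod 2 → ℝ // IsUnitProfile g}, weightEnum C g
  have hle (g) (hg : IsUnitProfile g) : weightEnum C g ≤ M :=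
    le_ciSup (f := fun g : {g // IsUnitProfile g} => weightEnum C g)
      ⟨Fintype.card C, by rintro _ ⟨g, rfl⟩; exact weightEnum_le_card C g.2⟩ ⟨g, hg⟩
  have hM : 0 ≤ M := (weightEnum_nonneg C fun i => (hf i).1).trans (hle f hf)
  have hsq (g) (hg : IsUnitProfile g) : weightEnum C g ^ 2 ≤ M := by
    have hcard : (0 : ℝ) < Fintype.card C := by exact_mod_cast Fintype.card_pos
    refine le_of_mul_le_mul_left ((card_mul_weightEnum_sq_le hC fun i => (hg i).1).trans ?_) hcard
    exact (sum_le_sum fun (d : C) _ => hle _ (hg.correlationProfile d)).trans_eq (by simp)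
  have hM_le_sqrt : M ≤ √M := ciSup_le fun g =>
    (Real.le_sqrt (weightEnum_nonneg C fun i => (g.2 i).1) hM).2 (hsq g g.2)
  have hM1 : M ≤ 1 := by
    have := (Real.le_sqrt hM hM).1 hM_le_sqrt
    nlinarith
  exact (hle f hf).trans hM1

theorem IsSelfOrthogonal.sum_pow_mul_pow_le {C : Submodule (ZMod 2) (ι → ZMod 2)}
    (hC : IsSelfOrthogonal C) {m : ℕ} (hm : Fintype.card ι = 2 * m) {u : ℝ} (hu0 : 0 ≤ u)
    (hu2 : u ≤ 2) :
    ∑ c : C, u ^ (m - hammingNorm (c : ι → ZMod 2) / 2) *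
        (2 - u) ^ (hammingNorm (c : ι → ZMod 2) / 2) ≤ 2 ^ m := by
  set g : ZMod 2 → ℝ := fun a => if a = 0 then √(u / 2) else √((2 - u) / 2)
  have hg0 : g 0 ^ 2 = u / 2 := by simp only [g, if_pos rfl]; exact Real.sq_sqrt (by linarith)
  have hg1 : g 1 ^ 2 = (2 - u) / 2 := by
    simp only [g, if_neg one_ne_zero]; exact Real.sq_sqrt (by linarith)
  have hg : IsUnitProfile fun _ : ι => g := fun _ =>
    ⟨fun a => by positivity, by rw [hg0, hg1]; ring⟩
  have hterm (c : C) : u ^ (m - hammingNorm (c : ι → ZMod 2) / 2) *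
      (2 - u) ^ (hammingNorm (c : ι → ZMod 2) / 2) =
        2 ^ m * prodWeight (fun _ => g) (c : ι → ZMod 2) := by
    obtain ⟨j, hj⟩ := hC.even_hammingNorm c.2
    have hle : j + j ≤ 2 * m := hm ▸ hj ▸ hammingNorm_le_card_fintype
    obtain ⟨k, rfl⟩ := Nat.exists_eq_add_of_le (show j ≤ m by omega)
    rw [prodWeight, prod_apply_eq_pow_hammingNorm, hj, hm, show (j + j) / 2 = j by omega,
      show j + k - j = k by omega, show 2 * (j + k) - (j + j) = 2 * k by omega,
      ← two_mul, pow_mul, pow_mul, hg0, hg1, div_pow, div_pow, pow_add]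
    field_simp
  calc _ = 2 ^ m * weightEnum C (fun _ => g) := by
        rw [weightEnum, mul_sum]; exact sum_congr rfl fun c _ => hterm c
    _ ≤ 2 ^ m := mul_le_of_le_one_right (by positivity) (hC.weightEnum_le_one hg)

end BinaryCode

open BinaryCode

lemma sum_range_weightDist_mul {n : ℕ} {C : Submodule (ZMod 2) (Fin n → ZMod 2)}
    (hC : ∀ c ∈ C, Even (hammingNorm c)) (φ : ℕ → ℝ) :
    ∑ j ∈ range (n / 2 + 1), (weightDist C (2 * j) : ℝ) * φ j =
      ∑ c : C, φ (hammingNorm (c : Fin n → ZMod 2) / 2) := by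
  have hmaps : ∀ x ∈ univ.filter (· ∈ C), hammingNorm x / 2 ∈ range (n / 2 + 1) := fun x _ => by
    have := hammingNorm_le_card_fintype (x := x)
    rw [Fintype.card_fin] at this
    exact mem_range.2 (by omega)
  calc ∑ j ∈ range (n / 2 + 1), (weightDist C (2 * j) : ℝ) * φ j
      = ∑ j ∈ range (n / 2 + 1), ∑ x ∈ univ.filter (· ∈ C) with hammingNorm x / 2 = j,
          φ (hammingNorm x / 2) := sum_congr rfl fun j _ => ?_
    _ = ∑ x ∈ univ.filter (· ∈ C), φ (hammingNorm x / 2) := sum_fiberwise_of_maps_to hmaps _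
    _ = ∑ c : C, φ (hammingNorm (c : Fin n → ZMod 2) / 2) := sum_subtype _ (by simp) _
  rw [sum_congr rfl fun x hx => by rw [(mem_filter.1 hx).2], sum_const, nsmul_eq_mul, weightDist,
    filter_filter]
  congr 3
  refine filter_congr fun x _ => and_congr_right fun hx => ?_
  obtain ⟨k, hk⟩ := hC x hx
  omega

theorem ineq_15 (n : ℕ) (hn : Even n)
    (C : Submodule (ZMod 2) (Fin n → ZMod 2)) (hC : C ≤ dualCode C)
    (u : ℝ) (hu1 : 1 < u) (hu2 : u < 2) :
    ∑ j ∈ Finset.range (n / 2 + 1),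
        (weightDist C (2 * j) : ℝ) * u ^ (n / 2 - j) * (2 - u) ^ j
      ≤ 2 ^ ((n : ℝ) / 2) := by
  have hSO : IsSelfOrthogonal C := fun a ha b hb => hC ha b hb
  have hcard : Fintype.card (Fin n) = 2 * (n / 2) := by
    rw [Fintype.card_fin, Nat.two_mul_div_two_of_even hn]
  have hhalf : (n : ℝ) / 2 = (n / 2 : ℕ) := by
    rw [Nat.cast_div_charZero (even_iff_two_dvd.1 hn), Nat.cast_ofNat]
  calc _ = ∑ j ∈ range (n / 2 + 1),
          (weightDist C (2 * j) : ℝ) * (u ^ (n / 2 - j) * (2 - u) ^ j) := by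
        simp only [mul_assoc]
    _ = ∑ c : C, u ^ (n / 2 - hammingNorm (c : Fin n → ZMod 2) / 2) *
          (2 - u) ^ (hammingNorm (c : Fin n → ZMod 2) / 2) :=
        sum_range_weightDist_mul (fun c hc => hSO.even_hammingNorm hc) _
    _ ≤ 2 ^ (n / 2) := hSO.sum_pow_mul_pow_le hcard (by linarith) hu2.le
    _ = 2 ^ ((n : ℝ) / 2) := by rw [hhalf, Real.rpow_natCast]
end
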